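/- arXiv:1410.3690 — 7 statements merged into one kernel-verified Lean document; each statement's English description precedes it below -/
import Mathlib

section
/- Let (X, γ) be a generalized Minkowski space, let p₁, …, pₙ ∈ X, and let f : X → ℝ, f(x) = Σᵢ₌₁ⁿ γ(pᵢ − x). If x̄ ∈ X \ {p₁, …, pₙ}, then x̄ is a minimum point of f if and only if, for every i ∈ {1, …, n}, there exists a γ-norming functional φᵢ of pᵢ − x̄ such that Σᵢ₌₁ⁿ φᵢ = 0. -/
/-- A gauge on a real vector space: nonnegative, definite at `0`, positively homogeneous,
and subadditive. -/
def IsGauge {X : Type*} [AddCommGroup X] [Module ℝ X] (γ : X → ℝ) : Prop :=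
  (∀ x, 0 ≤ γ x) ∧ (∀ x : X, γ x = 0 → x = 0) ∧
    (∀ (l : ℝ) (x : X), 0 ≤ l → γ (l • x) = l * γ x) ∧
    ∀ x y, γ (x + y) ≤ γ x + γ y

/-- The polar function of a gauge, `γ°(φ) = sup {φ x : γ x ≤ 1}`. -/
noncomputable def gaugePolar {X : Type*} [AddCommGroup X] [Module ℝ X]
    (γ : X → ℝ) (φ : X →ₗ[ℝ] ℝ) : ℝ :=
  sSup (φ '' {x | γ x ≤ 1})

/-- `φ` is a `γ`-norming functional of `x`: `γ°(φ) = 1` and `φ x = γ x`. -/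
def IsNormingFunctional {X : Type*} [AddCommGroup X] [Module ℝ X]
    (γ : X → ℝ) (φ : X →ₗ[ℝ] ℝ) (x : X) : Prop :=
  gaugePolar γ φ = 1 ∧ φ x = γ x

/-! The minimality of `xbar` says that the sublinear function `Γ w = ∑ i, γ (w i)` on `Xⁿ`
attains its minimum over the coset `z + Δ` at `z = (pᵢ - xbar)ᵢ`, where `Δ` is the diagonal.
Taking the infimum over cosets, `w ↦ ⨅ d ∈ Δ, Γ (w + d)` is still sublinear, and Hahn–Banach gives
a linear `Φ` below it with `Φ z = Γ z`. Such a `Φ` lies below `Γ` and vanishes on `Δ`; its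
restrictions `φᵢ` to the factors lie below `γ`, are attained at the `zᵢ`, and sum to `Φ ∘ diag = 0`.
Conversely `∑ γ (pᵢ - xbar) = ∑ φᵢ (pᵢ - y) ≤ ∑ γ (pᵢ - y)`. -/

open Set

structure IsSublinear {E : Type*} [AddCommGroup E] [Module ℝ E] (N : E → ℝ) : Prop where
  smul_of_pos : ∀ c : ℝ, 0 < c → ∀ x, N (c • x) = c * N x
  add_le : ∀ x y, N (x + y) ≤ N x + N y

namespace IsSublinear

variable {E F : Type*} [AddCommGroup E] [Module ℝ E] [AddCommGroup F] [Module ℝ F] {N : E → ℝ}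

theorem map_zero (hN : IsSublinear N) : N 0 = 0 := by
  have h := hN.smul_of_pos 2 two_pos 0
  rw [smul_zero] at h
  linarith

theorem neg_le_map_neg (hN : IsSublinear N) (x : E) : -N x ≤ N (-x) := by
  have h := hN.add_le x (-x)
  rw [add_neg_cancel, hN.map_zero] at h
  linarith

theorem mul_le_map_smul (hN : IsSublinear N) (c : ℝ) (x : E) : c * N x ≤ N (c • x) := by
  rcases lt_trichotomy c 0 with hc | rfl | hc
  · calc c * N x = -c * -N x := by ring
      _ ≤ -c * N (-x) := mul_le_mul_of_nonneg_left (hN.neg_le_map_neg x) (by linarith)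
      _ = N (c • x) := by rw [← hN.smul_of_pos _ (neg_pos.2 hc), smul_neg, neg_smul, neg_neg]
  · simp [hN.map_zero]
  · rw [hN.smul_of_pos c hc]

theorem comp (hN : IsSublinear N) (A : F →ₗ[ℝ] E) : IsSublinear fun x => N (A x) where
  smul_of_pos c hc x := by simp only [map_smul, hN.smul_of_pos c hc]
  add_le x y := by simp only [map_add, hN.add_le]

theorem sum {ι : Type*} (s : Finset ι) {N : ι → E → ℝ} (hN : ∀ i, IsSublinear (N i)) :
    IsSublinear fun x => ∑ i ∈ s, N i x where
  smul_of_pos c hc x := by simp only [(hN _).smul_of_pos c hc, Finset.mul_sum]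
  add_le x y := by
    rw [← Finset.sum_add_distrib]
    exact Finset.sum_le_sum fun i _ => (hN i).add_le x y

theorem exists_linearMap_le_eq (hN : IsSublinear N) (z : E) :
    ∃ Φ : E →ₗ[ℝ] ℝ, (∀ x, Φ x ≤ N x) ∧ Φ z = N z := by
  have hz : ∀ c : ℝ, c • z = 0 → (RingHom.id ℝ) c • N z = 0 := by
    intro c h
    rcases eq_or_ne c 0 with rfl | hc
    · exact zero_smul _ _
    · rw [(smul_eq_zero.1 h).resolve_left hc, hN.map_zero, smul_zero]
  obtain ⟨Φ, hΦf, hΦN⟩ := exists_extension_of_le_sublinear (LinearPMap.mkSpanSingleton' z (N z) hz)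
    N hN.smul_of_pos hN.add_le <| by
      rintro ⟨x, hx⟩
      obtain ⟨c, rfl⟩ := Submodule.mem_span_singleton.1 hx
      rw [LinearPMap.mkSpanSingleton'_apply]
      exact hN.mul_le_map_smul c z
  refine ⟨Φ, hΦN, ?_⟩
  exact (hΦf ⟨z, Submodule.mem_span_singleton_self z⟩).trans
    (LinearPMap.mkSpanSingleton'_apply_self _ _ _ _)

theorem iInf_add (hN : IsSublinear N) (A : F →ₗ[ℝ] E)
    (hbdd : ∀ w, BddBelow (range fun d => N (w + A d))) :
    IsSublinear fun w => ⨅ d, N (w + A d) where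
  smul_of_pos c hc w := by
    have hA : Function.Surjective fun d : F => c • d := fun d => ⟨c⁻¹ • d, smul_inv_smul₀ hc.ne' d⟩
    rw [← hA.iInf_comp, Real.mul_iInf_of_nonneg hc.le]
    simp only [map_smul, ← smul_add, hN.smul_of_pos c hc]
  add_le u v := le_ciInf_add_ciInf fun d e =>
    calc ⨅ d', N (u + v + A d') ≤ N (u + v + A (d + e)) := ciInf_le (hbdd _) _
      _ ≤ N (u + A d) + N (v + A e) := by
          rw [map_add, add_add_add_comm]
          exact hN.add_le _ _

theorem forall_le_map_add_iff (hN : IsSublinear N) (A : F →ₗ[ℝ] E) (z : E) :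
    (∀ d, N z ≤ N (z + A d)) ↔
      ∃ Φ : E →ₗ[ℝ] ℝ, (∀ x, Φ x ≤ N x) ∧ Φ z = N z ∧ Φ ∘ₗ A = 0 := by
  constructor
  · intro hmin
    have hbdd (w : E) : BddBelow (range fun d => N (w + A d)) := by
      refine ⟨N z - N (z - w), ?_⟩
      rintro _ ⟨d, rfl⟩
      have h := hN.add_le (w + A d) (z - w)
      rw [show w + A d + (z - w) = z + A d by abel] at h
      linarith [hmin d]
    set M := fun w => ⨅ d, N (w + A d)
    have hMN (w : E) (d : F) : M w ≤ N (w + A d) := ciInf_le (hbdd w) d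
    obtain ⟨Φ, hΦM, hΦz⟩ := (hN.iInf_add A hbdd).exists_linearMap_le_eq z
    have hΦA (d : F) : Φ (A d) ≤ 0 := by
      simpa [hN.map_zero] using (hΦM (A d)).trans (hMN (A d) (-d))
    refine ⟨Φ, fun x => by simpa using (hΦM x).trans (hMN x 0), ?_, ?_⟩
    · rw [hΦz]
      exact le_antisymm (by simpa using hMN z 0) (le_ciInf hmin)
    · ext d
      have := hΦA (-d)
      simp only [map_neg] at this
      simpa using le_antisymm (hΦA d) (by linarith)
  · rintro ⟨Φ, hΦN, hΦz, hΦA⟩ d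
    have : Φ (A d) = 0 := LinearMap.congr_fun hΦA d
    calc N z = Φ (z + A d) := by rw [map_add, this, add_zero, hΦz]
      _ ≤ N (z + A d) := hΦN _

theorem forall_sum_le_sum_add_iff {ι : Type*} [Fintype ι] (hN : IsSublinear N) (z : ι → E) :
    (∀ d, ∑ i, N (z i) ≤ ∑ i, N (z i + d)) ↔
      ∃ φ : ι → E →ₗ[ℝ] ℝ, (∀ i, (∀ x, φ i x ≤ N x) ∧ φ i (z i) = N (z i)) ∧ ∑ i, φ i = 0 := by
  classical
  have hsum : IsSublinear fun w : ι → E => ∑ i, N (w i) :=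
    IsSublinear.sum _ fun i => hN.comp (LinearMap.proj (R := ℝ) (φ := fun _ : ι => E) i)
  refine (hsum.forall_le_map_add_iff (LinearMap.pi fun _ => LinearMap.id) z).trans ?_
  rw [(LinearMap.lsum ℝ (fun _ => E) ℝ).surjective.exists]
  refine exists_congr fun φ => ?_
  set Φ := LinearMap.lsum ℝ (fun _ => E) ℝ φ
  have hΦ (w : ι → E) : Φ w = ∑ i, φ i (w i) := by simp [Φ]
  have hle : (∀ w, Φ w ≤ ∑ i, N (w i)) ↔ ∀ i x, φ i x ≤ N x := by
    refine ⟨fun h i x => ?_, fun h w => (hΦ w).trans_le (Finset.sum_le_sum fun i _ => h i (w i))⟩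
    have := h (Pi.single i x)
    rwa [LinearMap.lsum_piSingle, Fintype.sum_eq_single i fun j hj => by simp [hj, hN.map_zero],
      Pi.single_eq_same] at this
  have hdiag : (Φ ∘ₗ LinearMap.pi fun _ => LinearMap.id) = ∑ i, φ i := by
    ext x; simp [hΦ]
  rw [hle, hdiag, hΦ, forall_and, and_assoc]
  refine and_congr_right fun hφN => and_congr_left' ?_
  simpa using Finset.sum_eq_sum_iff_of_le fun i (_ : i ∈ Finset.univ) => hφN i (z i)

end IsSublinear

namespace IsGauge

variable {X : Type*} [AddCommGroup X] [Module ℝ X] {γ : X → ℝ}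

theorem isSublinear (hγ : IsGauge γ) : IsSublinear γ where
  smul_of_pos c hc x := hγ.2.2.1 c x hc.le
  add_le := hγ.2.2.2

theorem pos (hγ : IsGauge γ) {x : X} (hx : x ≠ 0) : 0 < γ x :=
  (hγ.1 x).lt_of_ne' fun h => hx (hγ.2.1 x h)

theorem map_inv_smul_self (hγ : IsGauge γ) {x : X} (hx : x ≠ 0) : γ ((γ x)⁻¹ • x) = 1 := by
  rw [hγ.2.2.1 _ _ (inv_nonneg.2 (hγ.pos hx).le), inv_mul_cancel₀ (hγ.pos hx).ne']

theorem le_of_gaugePolar_eq_one (hγ : IsGauge γ) {φ : X →ₗ[ℝ] ℝ} (h : gaugePolar γ φ = 1)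
    (x : X) : φ x ≤ γ x := by
  -- an unbounded image would make `gaugePolar γ φ = sSup _ = 0`
  have hbdd : BddAbove (φ '' {x | γ x ≤ 1}) := by
    by_contra hb
    rw [gaugePolar, Real.sSup_of_not_bddAbove hb] at h
    exact zero_ne_one h
  rcases eq_or_ne x 0 with rfl | hx
  · rw [map_zero, hγ.isSublinear.map_zero]
  · have h1 : φ ((γ x)⁻¹ • x) ≤ 1 := h ▸ le_csSup hbdd ⟨_, (hγ.map_inv_smul_self hx).le, rfl⟩
    rwa [map_smul, smul_eq_mul, inv_mul_le_iff₀ (hγ.pos hx), mul_one] at h1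

theorem isNormingFunctional_iff (hγ : IsGauge γ) {φ : X →ₗ[ℝ] ℝ} {z : X} (hz : z ≠ 0) :
    IsNormingFunctional γ φ z ↔ (∀ x, φ x ≤ γ x) ∧ φ z = γ z := by
  refine and_congr_left fun hφz => ⟨hγ.le_of_gaugePolar_eq_one, fun hφ => le_antisymm ?_ ?_⟩
  · exact Real.sSup_le (by rintro _ ⟨x, hx, rfl⟩; exact (hφ x).trans hx) zero_le_one
  · have hbdd : BddAbove (φ '' {x | γ x ≤ 1}) :=
      ⟨1, by rintro _ ⟨x, hx, rfl⟩; exact (hφ x).trans hx⟩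
    refine le_csSup_of_le hbdd ⟨_, (hγ.map_inv_smul_self hz).le, rfl⟩ ?_
    rw [map_smul, smul_eq_mul, hφz, inv_mul_cancel₀ (hγ.pos hz).ne']

end IsGauge

theorem fermatTorricelli_minimum_iff_norming_functionals_general
    {X : Type*} [NormedAddCommGroup X] [NormedSpace ℝ X]
    (γ : X → ℝ) (hγ : IsGauge γ) {n : ℕ} (p : Fin n → X) (xbar : X)
    (hxbar : ∀ i, xbar ≠ p i) :
    (∀ y : X, ∑ i, γ (p i - xbar) ≤ ∑ i, γ (p i - y)) ↔
      ∃ φ : Fin n → (X →ₗ[ℝ] ℝ),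
        (∀ i, IsNormingFunctional γ (φ i) (p i - xbar)) ∧ ∑ i, φ i = 0 := by
  have hz (i : Fin n) : p i - xbar ≠ 0 := sub_ne_zero.2 (hxbar i).symm
  simp_rw [hγ.isNormingFunctional_iff (hz _), ← hγ.isSublinear.forall_sum_le_sum_add_iff]
  refine (Equiv.subLeft xbar).forall_congr fun y => ?_
  simp only [Equiv.subLeft_apply, sub_add_sub_cancel]

/-- A point `xbar` outside `{p₁, …, pₙ}` minimizes `x ↦ ∑ γ(pᵢ - x)` iff there are
`γ`-norming functionals `φᵢ` of `pᵢ - xbar` summing to zero. -/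
theorem fermatTorricelli_minimum_iff_norming_functionals
    {X : Type*} [NormedAddCommGroup X] [NormedSpace ℝ X] [FiniteDimensional ℝ X]
    (γ : X → ℝ) (hγ : IsGauge γ) {n : ℕ} (p : Fin n → X) (xbar : X)
    (hxbar : ∀ i, xbar ≠ p i) :
    (∀ y : X, ∑ i, γ (p i - xbar) ≤ ∑ i, γ (p i - y)) ↔
      ∃ φ : Fin n → (X →ₗ[ℝ] ℝ),
        (∀ i, IsNormingFunctional γ (φ i) (p i - xbar)) ∧ ∑ i, φ i = 0 :=
  fermatTorricelli_minimum_iff_norming_functionals_general γ hγ p xbar hxbar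
end

section
/- Let (X, γ) be a generalized Minkowski space, let p₁, …, pₙ ∈ X be distinct, and let f : X → ℝ, f(x) = Σᵢ₌₁ⁿ γ(pᵢ − x). A point p_j (1 ≤ j ≤ n) is a minimum point of f if and only if, for every i ∈ {1, …, n} with i ≠ j, there exists a γ-norming functional φᵢ of pᵢ − p_j such that γ°(−Σ_{i≠j} φᵢ) ≤ 1. -/
/-! Sufficiency: summing `φᵢ (pᵢ - p j) = φᵢ (pᵢ - y) + φᵢ (y - p j)` over `i ≠ j` and bounding
each `φᵢ`, and `-∑ φᵢ`, by `γ` gives `f (p j) ≤ f y`.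

Necessity: with `xᵢ = pᵢ - p j`, minimality of `p j` says that `x` minimizes the sublinear
function `u ↦ ∑ γ uᵢ` on `x + Δ`, where `Δ ⊆ Xⁿ` is the diagonal. Hahn–Banach on `Δ ⊕ ℝ x` yields
a linear functional below it that vanishes on `Δ` and agrees with it at `x`; its components `ψᵢ`
are below `γ` with `ψᵢ xᵢ = γ xᵢ`, hence norming for `i ≠ j`, and vanishing on `Δ` says
`-∑_{i ≠ j} ψᵢ = ψ j ≤ γ`. -/

section Sublinear

variable {E : Type*} [AddCommGroup E] [Module ℝ E] {N : E → ℝ}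

theorem exists_subgradient_vanishing_of_forall_le_add
    (N_hom : ∀ c : ℝ, 0 < c → ∀ x, N (c • x) = c * N x) (N_add : ∀ x y, N (x + y) ≤ N x + N y)
    (D : Submodule ℝ E) {x : E} (hx : ∀ d ∈ D, N x ≤ N (x + d)) :
    ∃ Φ : E →ₗ[ℝ] ℝ, (∀ y, Φ y ≤ N y) ∧ (∀ d ∈ D, Φ d = 0) ∧ Φ x = N x := by
  have N_zero : N 0 = 0 := by
    have h := N_hom 2 two_pos 0
    rw [smul_zero] at h
    linarith
  have N_hom_nonneg : ∀ c : ℝ, 0 ≤ c → ∀ y, N (c • y) = c * N y := by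
    intro c hc y
    rcases hc.eq_or_lt with rfl | hc
    · rw [zero_smul, zero_mul, N_zero]
    · exact N_hom c hc y
  have hD : ∀ d ∈ D, 0 ≤ N d := fun d hd => by linarith [hx d hd, N_add x d]
  by_cases hxD : x ∈ D
  · obtain ⟨Φ, hΦD, hΦN⟩ :=
      exists_extension_of_le_sublinear ⟨D, 0⟩ N N_hom N_add fun d => hD d d.2
    have hNx : N x = 0 :=
      le_antisymm (by simpa [N_zero] using hx (-x) (D.neg_mem hxD)) (hD x hxD)
    exact ⟨Φ, hΦN, fun d hd => hΦD ⟨d, hd⟩, by rw [hNx]; exact hΦD ⟨x, hxD⟩⟩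
  -- `d + c • x ↦ c * N x` is below `N`: by homogeneity if `c > 0`, since `N ≥ 0` on `D` if `c ≤ 0`.
  have hbelow : ∀ d ∈ D, ∀ c : ℝ, c * N x ≤ N (d + c • x) := by
    intro d hd c
    rcases lt_or_ge 0 c with hc | hc
    · rw [show d + c • x = c • (x + c⁻¹ • d) by rw [smul_add, smul_inv_smul₀ hc.ne', add_comm],
        N_hom c hc]
      exact mul_le_mul_of_nonneg_left (hx _ (D.smul_mem _ hd)) hc.le
    · have h := N_add (d + c • x) ((-c) • x)
      rw [neg_smul, add_neg_cancel_right, ← neg_smul, N_hom_nonneg (-c) (neg_nonneg.2 hc)] at h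
      linarith [hD d hd]
  obtain ⟨Φ, hΦℓ, hΦN⟩ :=
    exists_extension_of_le_sublinear (LinearPMap.supSpanSingleton ⟨D, 0⟩ x (N x) hxD) N
      N_hom N_add <| by
    rintro ⟨z, hz⟩
    obtain ⟨d, hd, _, hc, rfl⟩ := Submodule.mem_sup.1 hz
    obtain ⟨c, rfl⟩ := Submodule.mem_span_singleton.1 hc
    rw [LinearPMap.supSpanSingleton_apply_mk _ _ _ hxD d hd]
    simpa using hbelow d hd c
  refine ⟨Φ, hΦN, fun d hd => ?_, ?_⟩
  · rw [hΦℓ ⟨d, Submodule.mem_sup_left hd⟩, LinearPMap.supSpanSingleton_apply_mk_of_mem _ _ hxD hd]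
    rfl
  · rw [hΦℓ ⟨x, Submodule.mem_sup_right (Submodule.mem_span_singleton_self x)⟩,
      LinearPMap.supSpanSingleton_apply_self]

end Sublinear

section Gauge

variable {X : Type*} [AddCommGroup X] [Module ℝ X] {γ : X → ℝ}

theorem IsGauge.map_zero (hγ : IsGauge γ) : γ 0 = 0 := by
  simpa using hγ.2.2.1 0 0 le_rfl

theorem IsGauge.pos_s2 (hγ : IsGauge γ) {x : X} (hx : x ≠ 0) : 0 < γ x :=
  (hγ.1 x).lt_of_ne fun h => hx (hγ.2.1 x h.symm)

theorem IsGauge.map_inv_smul_self_s2 (hγ : IsGauge γ) {x : X} (hx : x ≠ 0) :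
    γ ((γ x)⁻¹ • x) = 1 := by
  rw [hγ.2.2.1 _ _ (inv_nonneg.2 (hγ.1 x)), inv_mul_cancel₀ (hγ.pos_s2 hx).ne']

theorem IsGauge.forall_sum_le_add_iff_exists_subgradients (hγ : IsGauge γ) {ι : Type*}
    [Fintype ι] (x : ι → X) :
    (∀ v, ∑ i, γ (x i) ≤ ∑ i, γ (x i + v)) ↔
      ∃ ψ : ι → X →ₗ[ℝ] ℝ, (∀ i y, ψ i y ≤ γ y) ∧ (∀ i, ψ i (x i) = γ (x i)) ∧ ∑ i, ψ i = 0 := by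
  classical
  constructor
  · intro hx
    obtain ⟨Φ, hΦN, hΦD, hΦx⟩ := exists_subgradient_vanishing_of_forall_le_add
      (N := fun u : ι → X => ∑ i, γ (u i))
      (fun c hc u => by simp only [Pi.smul_apply, hγ.2.2.1 c _ hc.le, Finset.mul_sum])
      (fun u w => by
        simpa only [Pi.add_apply, ← Finset.sum_add_distrib] using
          Finset.sum_le_sum fun i _ => hγ.2.2.2 (u i) (w i))
      (LinearMap.range (LinearMap.pi fun _ => LinearMap.id)) (x := x)
      (by rintro _ ⟨v, rfl⟩; exact hx v)
    set ψ : ι → X →ₗ[ℝ] ℝ := fun i => Φ ∘ₗ LinearMap.single ℝ (fun _ => X) i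
    have hΦ : ∀ u, Φ u = ∑ i, ψ i (u i) := fun u => by
      conv_lhs => rw [← Finset.univ_sum_single u]
      simp [ψ, map_sum]
    have hψ : ∀ i y, ψ i y ≤ γ y := fun i y => by
      have h := hΦN (Pi.single i y)
      rwa [Fintype.sum_eq_single i fun k hk => by rw [Pi.single_eq_of_ne hk, hγ.map_zero],
        Pi.single_eq_same] at h
    refine ⟨ψ, hψ, fun i => ?_, ?_⟩
    · rw [hΦ] at hΦx
      exact (Finset.sum_eq_sum_iff_of_le fun i _ => hψ i (x i)).1 hΦx i (Finset.mem_univ i)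
    · ext v
      simpa [hΦ] using hΦD _ ⟨v, rfl⟩
  · rintro ⟨ψ, hψ, hψx, hsum⟩ v
    calc ∑ i, γ (x i) = ∑ i, ψ i (x i + v) := by
          simp [hψx, Finset.sum_add_distrib, ← LinearMap.sum_apply, hsum]
      _ ≤ ∑ i, γ (x i + v) := Finset.sum_le_sum fun i _ => hψ i _

theorem gaugePolar_le_one_of_le {φ : X →ₗ[ℝ] ℝ} (h : ∀ x, φ x ≤ γ x) : gaugePolar γ φ ≤ 1 :=
  Real.sSup_le (by rintro _ ⟨x, hx, rfl⟩; exact (h x).trans hx) zero_le_one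

theorem IsGauge.isNormingFunctional_of_le (hγ : IsGauge γ) {φ : X →ₗ[ℝ] ℝ} {x : X}
    (hφ : ∀ y, φ y ≤ γ y) (hφx : φ x = γ x) (hx : x ≠ 0) : IsNormingFunctional γ φ x := by
  refine ⟨(gaugePolar_le_one_of_le hφ).antisymm ?_, hφx⟩
  have hbdd : BddAbove (φ '' {y | γ y ≤ 1}) := ⟨1, by rintro _ ⟨y, hy, rfl⟩; exact (hφ y).trans hy⟩
  calc (1 : ℝ) = φ ((γ x)⁻¹ • x) := by
        rw [map_smul, smul_eq_mul, hφx, inv_mul_cancel₀ (hγ.pos_s2 hx).ne']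
    _ ≤ gaugePolar γ φ := le_csSup hbdd ⟨_, (hγ.map_inv_smul_self_s2 hx).le, rfl⟩

end Gauge

section FiniteDimensional

variable {X : Type*} [NormedAddCommGroup X] [NormedSpace ℝ X] [FiniteDimensional ℝ X]
  {γ : X → ℝ}

theorem IsGauge.continuous (hγ : IsGauge γ) : Continuous γ := by
  have hconv : ConvexOn ℝ Set.univ γ := ⟨convex_univ, fun x _ y _ a b ha hb _ => by
    calc γ (a • x + b • y) ≤ γ (a • x) + γ (b • y) := hγ.2.2.2 _ _
      _ = a • γ x + b • γ y := by rw [hγ.2.2.1 a x ha, hγ.2.2.1 b y hb]; rfl⟩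
  exact continuousOn_univ.1 (hconv.continuousOn isOpen_univ)

theorem IsGauge.exists_pos_mul_norm_le (hγ : IsGauge γ) : ∃ m > 0, ∀ x, m * ‖x‖ ≤ γ x := by
  rcases subsingleton_or_nontrivial X with hX | hX
  · exact ⟨1, one_pos, fun x => by simp [Subsingleton.elim x 0, hγ.map_zero]⟩
  obtain ⟨x₀, hx₀, hmin⟩ := (isCompact_sphere (0 : X) 1).exists_isMinOn
    (NormedSpace.sphere_nonempty.2 zero_le_one) hγ.continuous.continuousOn
  refine ⟨γ x₀, hγ.pos_s2 (ne_zero_of_mem_unit_sphere ⟨x₀, hx₀⟩), fun x => ?_⟩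
  rcases eq_or_ne x 0 with rfl | hx
  · simp [hγ.map_zero]
  have hnx : 0 < ‖x‖ := norm_pos_iff.2 hx
  have h : γ x₀ ≤ γ (‖x‖⁻¹ • x) := hmin (by simp [norm_smul, hnx.ne'])
  rw [hγ.2.2.1 _ _ (inv_nonneg.2 hnx.le), le_inv_mul_iff₀ hnx] at h
  rwa [mul_comm]

theorem IsGauge.le_of_gaugePolar_le_one (hγ : IsGauge γ) {φ : X →ₗ[ℝ] ℝ}
    (h : gaugePolar γ φ ≤ 1) (x : X) : φ x ≤ γ x := by
  obtain ⟨m, hm, hmγ⟩ := hγ.exists_pos_mul_norm_le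
  set φc := LinearMap.toContinuousLinearMap φ
  -- Without this bound `gaugePolar γ φ` could be the junk value `sSup = 0` of an unbounded set.
  have hbdd : BddAbove (φ '' {y | γ y ≤ 1}) := ⟨‖φc‖ * (1 / m), by
    rintro _ ⟨y, hy, rfl⟩
    calc φ y ≤ ‖φc‖ * ‖y‖ := (le_abs_self _).trans (φc.le_opNorm y)
      _ ≤ ‖φc‖ * (1 / m) := by
        gcongr
        rw [le_div_iff₀' hm]
        exact (hmγ y).trans hy⟩
  rcases eq_or_ne x 0 with rfl | hx
  · simp [hγ.map_zero]
  have h1 := (le_csSup hbdd ⟨_, (hγ.map_inv_smul_self_s2 hx).le, rfl⟩).trans h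
  rwa [map_smul, smul_eq_mul, inv_mul_le_one₀ (hγ.pos_s2 hx)] at h1

end FiniteDimensional

/-- A point `p j` minimizes `x ↦ ∑ γ(pᵢ - x)` iff for each `i ≠ j` there is a
`γ`-norming functional `φᵢ` of `pᵢ - p j` with `γ°(-∑_{i≠j} φᵢ) ≤ 1`. -/
theorem fermatTorricelli_minimum_at_given_point_iff
    {X : Type*} [NormedAddCommGroup X] [NormedSpace ℝ X] [FiniteDimensional ℝ X]
    (γ : X → ℝ) (hγ : IsGauge γ) {n : ℕ} (p : Fin n → X)
    (hp : Function.Injective p) (j : Fin n) :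
    (∀ y : X, ∑ i, γ (p i - p j) ≤ ∑ i, γ (p i - y)) ↔
      ∃ φ : Fin n → (X →ₗ[ℝ] ℝ),
        (∀ i, i ≠ j → IsNormingFunctional γ (φ i) (p i - p j)) ∧
        gaugePolar γ (-(∑ i ∈ Finset.univ.erase j, φ i)) ≤ 1 := by
  have hmin : (∀ y : X, ∑ i, γ (p i - p j) ≤ ∑ i, γ (p i - y)) ↔
      ∀ v, ∑ i, γ (p i - p j) ≤ ∑ i, γ (p i - p j + v) :=
    ⟨fun h v => by simpa [sub_add] using h (p j - v),
      fun h y => by simpa using h (p j - y)⟩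
  rw [hmin, hγ.forall_sum_le_add_iff_exists_subgradients]
  constructor
  · rintro ⟨ψ, hψ, hψx, hsum⟩
    refine ⟨ψ, fun i hij => hγ.isNormingFunctional_of_le (hψ i) (hψx i)
      (sub_ne_zero.2 (hp.ne hij)), ?_⟩
    rw [neg_eq_of_add_eq_zero_right ((Finset.sum_erase_add _ _ (Finset.mem_univ j)).trans hsum)]
    exact gaugePolar_le_one_of_le (hψ j)
  · rintro ⟨φ, hφ, hpol⟩
    refine ⟨Function.update φ j (-(∑ i ∈ Finset.univ.erase j, φ i)), fun i => ?_, fun i => ?_, ?_⟩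
    · rcases eq_or_ne i j with rfl | hij
      · simpa using hγ.le_of_gaugePolar_le_one hpol
      · simpa [hij] using hγ.le_of_gaugePolar_le_one (hφ i hij).1.le
    · rcases eq_or_ne i j with rfl | hij
      · simp [hγ.map_zero]
      · simpa [hij] using (hφ i hij).2
    · rw [Finset.sum_update_of_mem (Finset.mem_univ j), Finset.sdiff_singleton_eq_erase,
        neg_add_cancel]
end

section
/- Let (X, γ) be a generalized Minkowski space and let P = {p₁, …, pₙ} ⊆ X be finite. Suppose x̄ ∈ ft(P) \ P, and for each i ∈ {1, …, n} let φᵢ be a γ-norming functional of pᵢ − x̄ such that Σᵢ₌₁ⁿ φᵢ = 0. Then ft(P) = ⋂ᵢ₌₁ⁿ C(pᵢ, φᵢ), where C(x, φ) = x − {z ∈ X : φ(z) = γ(z)}. -/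
/-- If `xbar ∈ ft(P) \ P` and `φᵢ` are `γ`-norming functionals of `pᵢ - xbar` summing to
zero, then `ft(P)` is the intersection of the cones `C(pᵢ, φᵢ) = pᵢ - {z : φᵢ z = γ z}`. -/
theorem fermatTorricelli_locus_eq_iInter_cones
    {X : Type*} [NormedAddCommGroup X] [NormedSpace ℝ X] [FiniteDimensional ℝ X]
    (γ : X → ℝ) (hγ : IsGauge γ) {n : ℕ} (p : Fin n → X) (xbar : X)
    (hmin : ∀ y : X, ∑ i, γ (p i - xbar) ≤ ∑ i, γ (p i - y))
    (hnot : ∀ i, xbar ≠ p i)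
    (φ : Fin n → (X →ₗ[ℝ] ℝ))
    (hφ : ∀ i, IsNormingFunctional γ (φ i) (p i - xbar))
    (hsum : ∑ i, φ i = 0) :
    {x : X | ∀ y : X, ∑ i, γ (p i - x) ≤ ∑ i, γ (p i - y)} =
      ⋂ i, {w : X | ∃ z : X, φ i z = γ z ∧ w = p i - z} := by

  obtain ⟨hnn, hdef, hhom, hsub⟩ := hγ
  have h0 : γ (0:X) = 0 := by
    have := hhom 0 0 le_rfl
    simpa using this
  -- every gauge value dominated: φ i z ≤ γ z
  have hle : ∀ i (z : X), φ i z ≤ γ z := by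
    intro i z
    rcases eq_or_lt_of_le (hnn z) with h | h
    · have hz : z = 0 := hdef z h.symm
      simp [hz, h0]
    · have hw : γ ((γ z)⁻¹ • z) = 1 := by
        rw [hhom _ _ (inv_nonneg.mpr h.le)]
        field_simp
      have hmem : (φ i) ((γ z)⁻¹ • z) ∈ (φ i) '' {x | γ x ≤ 1} := ⟨_, hw.le, rfl⟩
      have hpol : sSup ((φ i) '' {x | γ x ≤ 1}) = 1 := (hφ i).1
      have hbdd : BddAbove ((φ i) '' {x | γ x ≤ 1}) := by
        by_contra hb
        rw [Real.sSup_of_not_bddAbove hb] at hpol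
        norm_num at hpol
      have hle1 : (φ i) ((γ z)⁻¹ • z) ≤ 1 := hpol ▸ le_csSup hbdd hmem
      rw [map_smul, smul_eq_mul] at hle1
      have := (inv_mul_le_iff₀ h).mp hle1
      linarith
  have hkey : ∀ x y : X, ∑ i, φ i (p i - x) = ∑ i, φ i (p i - y) := by
    intro x y
    have h1 : ∑ i, (φ i (p i - x) - φ i (p i - y)) = 0 := by
      have : ∀ i : Fin n, φ i (p i - x) - φ i (p i - y) = φ i (y - x) := by
        intro i
        rw [← map_sub]
        congr 1
        abel
      rw [Finset.sum_congr rfl fun i _ => this i]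
      have : ∑ i, φ i (y - x) = (∑ i, φ i) (y - x) := by
        rw [LinearMap.sum_apply]
      rw [this, hsum]
      simp
    rw [Finset.sum_sub_distrib] at h1
    linarith
  have hval : ∑ i, γ (p i - xbar) = ∑ i, φ i (p i - xbar) :=
    (Finset.sum_congr rfl fun i _ => ((hφ i).2).symm)
  ext x
  simp only [Set.mem_setOf_eq, Set.mem_iInter]
  constructor
  · intro hx i
    refine ⟨p i - x, ?_, by abel⟩
    have h1 : ∑ i, γ (p i - x) ≤ ∑ i, γ (p i - xbar) := hx xbar
    have h2 : ∑ i, φ i (p i - xbar) = ∑ i, φ i (p i - x) := hkey xbar x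
    have h3 : ∑ i, φ i (p i - x) ≤ ∑ i, γ (p i - x) :=
      Finset.sum_le_sum fun i _ => hle i _
    have heq : ∑ i, φ i (p i - x) = ∑ i, γ (p i - x) := by linarith
    exact ((Finset.sum_eq_sum_iff_of_le fun i _ => hle i _).mp heq i (Finset.mem_univ i))
  · intro hx y
    have heq : ∑ i, γ (p i - x) = ∑ i, φ i (p i - x) := by
      refine Finset.sum_congr rfl fun i _ => ?_
      obtain ⟨z, hz1, hz2⟩ := hx i
      have : z = p i - x := by
        rw [hz2]; abel
      rw [← this, ← hz1, this]
    calc ∑ i, γ (p i - x) = ∑ i, φ i (p i - x) := heq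
      _ = ∑ i, φ i (p i - y) := hkey x y
      _ ≤ ∑ i, γ (p i - y) := Finset.sum_le_sum fun i _ => hle i _
end

section
/- Let (X, γ) be a generalized Minkowski space, let p₀, p₁, …, pₙ ∈ X with n ≥ 1, and let λ₁, …, λₙ > 0 be real numbers. Then: (a) if p₀ ∈ ft({p₁, …, pₙ}), then p₀ ∈ ft({p₀, p₁, …, pₙ}); and (b) if p₀ ∈ ft({p₁, …, pₙ}), then p₀ ∈ ft({p₀ + λ₁(p₁ − p₀), …, p₀ + λₙ(pₙ − p₀)}). -/
lemma gauge_key {X : Type*} [AddCommGroup X] [Module ℝ X] {γ : X → ℝ} (hγ : IsGauge γ)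
    (a v : X) {l t : ℝ} (hl : 0 < l) (ht : 0 < t) (htl : t * l ≤ 1) :
    γ (a - t • v) + t * l * γ a - γ a ≤ t * γ (l • a - v) := by
  obtain ⟨h0, -, hhom, hadd⟩ := hγ
  have hl0 : l ≠ 0 := hl.ne'
  have h1 : a - t • v = (1 - t * l) • a + (t * l) • (a - l⁻¹ • v) := by
    rw [smul_sub, sub_smul, one_smul, smul_smul]
    rw [mul_assoc, mul_inv_cancel₀ hl0, mul_one]
    abel
  have h2 : l • (a - l⁻¹ • v) = l • a - v := by
    rw [smul_sub, smul_smul, mul_inv_cancel₀ hl0, one_smul]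
  have h3 : γ (l • a - v) = l * γ (a - l⁻¹ • v) := by
    rw [← h2, hhom l _ hl.le]
  have h4 : γ (a - t • v) ≤ (1 - t * l) * γ a + (t * l) * γ (a - l⁻¹ • v) := by
    rw [h1]
    calc γ ((1 - t * l) • a + (t * l) • (a - l⁻¹ • v))
        ≤ γ ((1 - t * l) • a) + γ ((t * l) • (a - l⁻¹ • v)) := hadd _ _
      _ = (1 - t * l) * γ a + (t * l) * γ (a - l⁻¹ • v) := by
          rw [hhom _ _ (by linarith), hhom _ _ (by positivity)]
  nlinarith [h0 (a - l⁻¹ • v)]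

/-- Adding the minimizer itself as a new given point, or rescaling the given points from the
minimizer by positive factors, preserves membership in the Fermat–Torricelli locus. -/
theorem fermatTorricelli_mem_insert_and_scaling
    {X : Type*} [NormedAddCommGroup X] [NormedSpace ℝ X] [FiniteDimensional ℝ X]
    (γ : X → ℝ) (hγ : IsGauge γ) {n : ℕ} (hn : 1 ≤ n) (p : Fin n → X) (p₀ : X)
    (l : Fin n → ℝ) (hl : ∀ i, 0 < l i)
    (hmin : ∀ y : X, ∑ i, γ (p i - p₀) ≤ ∑ i, γ (p i - y)) :
    (∀ y : X, γ (p₀ - p₀) + ∑ i, γ (p i - p₀) ≤ γ (p₀ - y) + ∑ i, γ (p i - y)) ∧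
      (∀ y : X, ∑ i, γ ((p₀ + l i • (p i - p₀)) - p₀) ≤
        ∑ i, γ ((p₀ + l i • (p i - p₀)) - y)) := by
  have h0 := hγ.1
  have hhom := hγ.2.2.1
  have hγ0 : γ (0 : X) = 0 := by
    have := hhom 0 0 le_rfl
    simpa using this
  constructor
  · intro y
    have h1 := hmin y
    have h2 := h0 (p₀ - y)
    rw [sub_self, hγ0]
    linarith
  · intro y
    haveI : NeZero n := ⟨Nat.pos_of_ne_zero (fun h => by omega) |>.ne'⟩
    have hne : (Finset.univ : Finset (Fin n)).Nonempty := Finset.univ_nonempty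
    set L : ℝ := Finset.univ.sup' hne l with hL
    have hLpos : 0 < L := lt_of_lt_of_le (hl ⟨0, hn⟩) (Finset.le_sup' l (Finset.mem_univ _))
    set t : ℝ := L⁻¹ with htdef
    have ht : 0 < t := inv_pos.mpr hLpos
    set v : X := y - p₀ with hv
    have key : ∀ i, γ ((p i - p₀) - t • v) + t * l i * γ (p i - p₀) - γ (p i - p₀)
        ≤ t * γ (l i • (p i - p₀) - v) := by
      intro i
      apply gauge_key hγ _ _ (hl i) ht
      rw [htdef, inv_mul_le_iff₀ hLpos, mul_one]
      exact Finset.le_sup' l (Finset.mem_univ i)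
    have hsum := Finset.sum_le_sum (s := Finset.univ) (fun i _ => key i)
    have hmin' := hmin (p₀ + t • v)
    have heq : ∀ i, p i - (p₀ + t • v) = (p i - p₀) - t • v := by intro i; abel
    simp_rw [heq] at hmin'
    have hLHS : ∀ i, (p₀ + l i • (p i - p₀)) - p₀ = l i • (p i - p₀) := by intro i; abel
    have hRHS : ∀ i, (p₀ + l i • (p i - p₀)) - y = l i • (p i - p₀) - v := by
      intro i; rw [hv]; abel
    simp_rw [hLHS, hRHS, hhom _ _ (hl _).le]
    rw [Finset.sum_sub_distrib, Finset.sum_add_distrib, ← Finset.mul_sum] at hsum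
    have expand : ∑ i, t * l i * γ (p i - p₀) = t * ∑ i, l i * γ (p i - p₀) := by
      rw [Finset.mul_sum]; congr 1; ext i; ring
    rw [expand] at hsum
    have := mul_le_mul_of_nonneg_left hmin' ht.le
    -- from hsum and hmin': t * ∑ l i * γ ≤ t * ∑ γ (l i • a i - v)
    have h5 : t * ∑ i, l i * γ (p i - p₀) ≤ t * ∑ i, γ (l i • (p i - p₀) - v) := by
      linarith
    exact le_of_mul_le_mul_left (by linarith) ht
end

section
/- Let (X, γ) be a generalized Minkowski space and let p₀, p₁, …, pₙ ∈ X with n ≥ 2. If p₀ ∈ ft({p₁, …, pₙ}) \ {p₁, …, pₙ}, then p₀ ∈ ft({p₀, p₁, …, p_{n−1}}). -/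
/-- If `p₀` minimizes the distance sum to `p₁, …, pₙ` (`n ≥ 2`) and is none of these points,
then `p₀` also minimizes the distance sum to `p₀, p₁, …, p_{n-1}`.
Here the points `p₁, …, pₙ` are indexed by `Fin (n+1)` with `1 ≤ n`. -/
theorem fermatTorricelli_mem_replace_last_point
    {X : Type*} [NormedAddCommGroup X] [NormedSpace ℝ X] [FiniteDimensional ℝ X]
    (γ : X → ℝ) (hγ : IsGauge γ) {n : ℕ} (hn : 1 ≤ n) (p : Fin (n + 1) → X) (p₀ : X)
    (hmin : ∀ y : X, ∑ i, γ (p i - p₀) ≤ ∑ i, γ (p i - y))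
    (hnot : ∀ i, p₀ ≠ p i) :
    ∀ y : X, γ (p₀ - p₀) + ∑ i : Fin n, γ (p i.castSucc - p₀) ≤
      γ (p₀ - y) + ∑ i : Fin n, γ (p i.castSucc - y) := by
  obtain ⟨hpos, -, hhom, htri⟩ := hγ
  have h0 : γ (p₀ - p₀) = 0 := by
    have := hhom 0 0 le_rfl
    simpa using this
  intro y
  have key := hmin y
  rw [Fin.sum_univ_castSucc, Fin.sum_univ_castSucc] at key
  have htri' : γ (p (Fin.last n) - y) ≤ γ (p (Fin.last n) - p₀) + γ (p₀ - y) := by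
    have := htri (p (Fin.last n) - p₀) (p₀ - y)
    simpa using this
  rw [h0]
  linarith
end

section
/- A generalized Minkowski space (X, γ) has a strictly convex gauge if and only if [x,y]_γ = [x,y] for all x, y ∈ X. -/
/-- A gauge is strictly convex (its unit sphere contains no segment of positive length) iff
every `γ`-segment `[x,y]_γ` coincides with the ordinary segment `[x,y]`. -/
theorem strictly_convex_gauge_iff_gammaSegment_eq_segment
    {X : Type*} [NormedAddCommGroup X] [NormedSpace ℝ X] [FiniteDimensional ℝ X]
    (γ : X → ℝ) (hγ : IsGauge γ) :
    (∀ x y : X, segment ℝ x y ⊆ {z : X | γ z = 1} → x = y) ↔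
      ∀ x y : X, {z : X | γ (x - z) + γ (z - y) = γ (x - y)} = segment ℝ x y := by
  obtain ⟨hpos, hdef, hhom, hsub⟩ := hγ
  have h0 : γ 0 = 0 := by
    have := hhom 0 0 le_rfl
    simpa using this
  constructor
  · intro hsc x y
    ext z
    simp only [Set.mem_setOf_eq]
    constructor
    · intro h
      obtain ⟨u, hu⟩ : ∃ u, u = x - z := ⟨_, rfl⟩
      obtain ⟨v, hv⟩ : ∃ v, v = z - y := ⟨_, rfl⟩
      rw [← hu, ← hv] at h
      have huv : u + v = x - y := by rw [hu, hv]; abel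
      by_cases hgu : γ u = 0
      · have hz : z = x := by
          have := hdef u hgu
          rw [hu, sub_eq_zero] at this
          exact this.symm
        rw [hz]; exact left_mem_segment ℝ x y
      by_cases hgv : γ v = 0
      · have hz : z = y := by
          have := hdef v hgv
          rw [hv, sub_eq_zero] at this
          exact this
        rw [hz]; exact right_mem_segment ℝ x y
      have hgu' : 0 < γ u := lt_of_le_of_ne (hpos u) (Ne.symm hgu)
      have hgv' : 0 < γ v := lt_of_le_of_ne (hpos v) (Ne.symm hgv)
      obtain ⟨a, ha⟩ : ∃ a : X, a = (γ u)⁻¹ • u := ⟨_, rfl⟩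
      obtain ⟨b, hb⟩ : ∃ b : X, b = (γ v)⁻¹ • v := ⟨_, rfl⟩
      have hua : (γ u) • a = u := by
        rw [ha, smul_smul, mul_inv_cancel₀ hgu, one_smul]
      have hub : (γ v) • b = v := by
        rw [hb, smul_smul, mul_inv_cancel₀ hgv, one_smul]
      have hga : γ a = 1 := by
        rw [ha, hhom _ _ (inv_nonneg.2 hgu'.le), inv_mul_cancel₀ hgu]
      have hgb : γ b = 1 := by
        rw [hb, hhom _ _ (inv_nonneg.2 hgv'.le), inv_mul_cancel₀ hgv]
      have hsum : γ u + γ v = γ (u + v) := by rw [huv]; exact h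
      have hseg : segment ℝ a b ⊆ {w : X | γ w = 1} := by
        rintro w ⟨s, t, hs, ht, hst, rfl⟩
        have hle : γ (s • a + t • b) ≤ 1 := by
          calc γ (s • a + t • b) ≤ γ (s • a) + γ (t • b) := hsub _ _
            _ = s * γ a + t * γ b := by rw [hhom s a hs, hhom t b ht]
            _ = 1 := by rw [hga, hgb]; linarith
        have hge : 1 ≤ γ (s • a + t • b) := by
          obtain ⟨c, hc⟩ : ∃ c : ℝ, c = min (γ u) (γ v) := ⟨_, rfl⟩
          have hc0 : 0 < c := hc ▸ lt_min hgu' hgv'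
          have hs1 : s ≤ 1 := by linarith
          have ht1 : t ≤ 1 := by linarith
          have hcu : c ≤ γ u := hc ▸ min_le_left _ _
          have hcv : c ≤ γ v := hc ▸ min_le_right _ _
          have h1 : c * s ≤ γ u := by nlinarith
          have h2 : c * t ≤ γ v := by nlinarith
          have hdecomp : u + v =
              c • (s • a + t • b) + ((γ u - c * s) • a + (γ v - c * t) • b) := by
            calc u + v = (γ u) • a + (γ v) • b := by rw [hua, hub]
              _ = c • (s • a + t • b) + ((γ u - c * s) • a + (γ v - c * t) • b) := by module
          have hineq : γ (u + v) ≤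
              c * γ (s • a + t • b) + ((γ u - c * s) + (γ v - c * t)) := by
            calc γ (u + v)
                ≤ γ (c • (s • a + t • b)) + γ ((γ u - c * s) • a + (γ v - c * t) • b) := by
                  rw [hdecomp]; exact hsub _ _
              _ ≤ γ (c • (s • a + t • b)) +
                    (γ ((γ u - c * s) • a) + γ ((γ v - c * t) • b)) := by
                  have := hsub ((γ u - c * s) • a) ((γ v - c * t) • b)
                  linarith
              _ = c * γ (s • a + t • b) + ((γ u - c * s) + (γ v - c * t)) := by
                  rw [hhom c _ hc0.le, hhom _ _ (by linarith), hhom _ _ (by linarith),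
                    hga, hgb]
                  ring
          have hcle : c * 1 ≤ c * γ (s • a + t • b) := by
            rw [mul_one]; nlinarith [hsum]
          exact le_of_mul_le_mul_left (by linarith [hcle]) hc0
        exact le_antisymm hle hge
      have hab : a = b := hsc a b hseg
      have key : γ v • u = γ u • v := by
        conv_lhs => rw [← hua]
        conv_rhs => rw [← hub]
        rw [hab, smul_smul, smul_smul, mul_comm]
      have hS : γ u + γ v ≠ 0 := ne_of_gt (by linarith)
      have hu2 : (γ u + γ v) • u = γ u • (x - y) := by
        rw [add_smul, key, ← smul_add, huv]
      refine ⟨γ v / (γ u + γ v), γ u / (γ u + γ v),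
        by positivity, by positivity, ?_, ?_⟩
      · field_simp; ring
      · apply smul_right_injective X hS
        show (γ u + γ v) • ((γ v / (γ u + γ v)) • x + (γ u / (γ u + γ v)) • y) =
          (γ u + γ v) • z
        have hz2 : z = x - u := by rw [hu]; abel
        rw [hz2, smul_sub, hu2, smul_add, smul_smul, smul_smul,
          mul_div_cancel₀ _ hS, mul_div_cancel₀ _ hS]
        module
    · rintro ⟨s, t, hs, ht, hst, rfl⟩
      have h1 : x - (s • x + t • y) = t • (x - y) := by
        have : s = 1 - t := by linarith
        rw [this]; module
      have h2 : (s • x + t • y) - y = s • (x - y) := by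
        have : t = 1 - s := by linarith
        rw [this]; module
      rw [h1, h2, hhom t _ ht, hhom s _ hs]
      linear_combination γ (x - y) * hst
  · intro heq x y hxy
    have hgx : γ x = 1 := hxy (left_mem_segment ℝ x y)
    have hgy : γ y = 1 := hxy (right_mem_segment ℝ x y)
    have hm : γ (x + y) = 2 := by
      have hmem : (1/2 : ℝ) • x + (1/2 : ℝ) • y ∈ segment ℝ x y :=
        ⟨1/2, 1/2, by norm_num, by norm_num, by norm_num, rfl⟩
      have h1 : γ ((1/2 : ℝ) • x + (1/2 : ℝ) • y) = 1 := hxy hmem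
      have h2 : x + y = (2 : ℝ) • ((1/2 : ℝ) • x + (1/2 : ℝ) • y) := by module
      rw [h2, hhom 2 _ (by norm_num), h1]; norm_num
    have hx : x ∈ segment ℝ (x + y) 0 := by
      rw [← heq (x + y) 0]
      show γ (x + y - x) + γ (x - 0) = γ (x + y - 0)
      rw [add_sub_cancel_left, sub_zero, sub_zero, hgx, hgy, hm]
      norm_num
    obtain ⟨p, q, hp, hq, hpq, hz⟩ := hx
    have hz' : p • (x + y) = x := by simpa using hz
    have hthis : p • x + p • y = x := by rw [← smul_add]; exact hz'
    have h4 : p • y = x - p • x := eq_sub_of_add_eq (by rw [add_comm]; exact hthis)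
    have hpx : (1 - p) • x = p • y := by rw [h4, sub_smul, one_smul]
    have hp1 : p ≤ 1 := by linarith
    have hval : (1 - p) * 1 = p * 1 := by
      calc (1 - p) * 1 = (1 - p) * γ x := by rw [hgx]
        _ = γ ((1 - p) • x) := (hhom _ _ (by linarith)).symm
        _ = γ (p • y) := by rw [hpx]
        _ = p * γ y := hhom _ _ hp
        _ = p * 1 := by rw [hgy]
    have hp2 : p = 1/2 := by linarith
    calc x = (2 : ℝ) • ((1 - p) • x) := by rw [hp2]; module
      _ = (2 : ℝ) • (p • y) := by rw [hpx]
      _ = y := by rw [hp2]; module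
end

section
/- Let K ⊆ ℝ^d, d ≥ 2, be a closed convex set. Then every (d−1)-face of K is exposed. Moreover, the (d−2)-skeleton of K satisfies ext_{d−2}(K) = bd(K) \ ⋃{ri(F) : F is an exposed (d−1)-face of K}, where bd denotes the topological boundary and ri the relative interior. -/
/-- `F` is a face of the closed convex set `K`: a convex subset of `K` such that whenever a
relative interior point of a segment `[x,y] ⊆ K` lies in `F`, the whole segment lies in `F`. -/
def IsFaceOf {X : Type*} [AddCommGroup X] [Module ℝ X] (K F : Set X) : Prop :=
  F ⊆ K ∧ Convex ℝ F ∧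
    ∀ x ∈ K, ∀ y ∈ K, (openSegment ℝ x y ∩ F).Nonempty → segment ℝ x y ⊆ F

/-- The affine dimension of a set: the dimension of the direction of its affine span. -/
noncomputable def affDim {X : Type*} [AddCommGroup X] [Module ℝ X] (A : Set X) : ℕ :=
  Module.finrank ℝ (affineSpan ℝ A).direction

/-- `F` is an exposed face of `K`: the intersection of `K` with a supporting hyperplane
`{y : φ y = sup φ(K)}` for some nonzero linear functional `φ` with `sup φ(K) < +∞`. -/
def IsExposedFaceOf {X : Type*} [AddCommGroup X] [Module ℝ X] (K F : Set X) : Prop :=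
  ∃ φ : X →ₗ[ℝ] ℝ, φ ≠ 0 ∧ BddAbove (φ '' K) ∧ F = K ∩ {y | φ y = sSup (φ '' K)}

/-- The `k`-skeleton of `K`: the set of `k`-extreme points, i.e. the points lying in the
relative interior of a face of `K` of affine dimension at most `k`. -/
def kSkeleton {X : Type*} [NormedAddCommGroup X] [NormedSpace ℝ X]
    (k : ℕ) (K : Set X) : Set X :=
  {x : X | x ∈ K ∧ ∃ F : Set X, IsFaceOf K F ∧ x ∈ intrinsicInterior ℝ F ∧ affDim F ≤ k}

/-!
Let `F` be a `(d-1)`-face and `x` a relative interior point of `F`. A face containing an interior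
point of `K` contains all of `K`, which is `d`-dimensional, so `x` is a boundary point, and a
supporting hyperplane at `x` cuts out an exposed face `E ∋ x`. Since `E` is a face meeting the
relative interior of `F`, it contains `F`; as `dim E ≤ d - 1 = dim F`, both have the same affine
span, so `x` is also a relative interior point of `E`, and by the same argument `E ⊆ F`.

For the skeleton, every `x ∈ K` lies in the relative interior of the face
`F_x = {y ∈ K | x + ε (x - y) ∈ K for some ε > 0}`. For `x ∈ bd K` this face is not
`d`-dimensional, and if it is `(d-1)`-dimensional it is exposed by the first part; conversely a
face of dimension at most `d - 2` can meet neither `int K` nor the relative interior of a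
`(d-1)`-face.
-/

open Set Filter Topology Module

section

variable {E : Type*} [AddCommGroup E] [Module ℝ E] {K F : Set E} {x : E}

theorem isFaceOf_of_isExtreme (hF : Convex ℝ F) (h : IsExtreme ℝ K F) : IsFaceOf K F :=
  ⟨h.subset, hF, fun _ hy _ hz ⟨_, hp, hpF⟩ =>
    hF.segment_subset (h.left_mem_of_mem_openSegment hy hz hpF hp)
      (h.right_mem_of_mem_openSegment hy hz hpF hp)⟩

theorem isExposedFaceOf_of_forall_le {φ : E →ₗ[ℝ] ℝ} (hφ : φ ≠ 0) (hx : x ∈ K)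
    (hmax : ∀ y ∈ K, φ y ≤ φ x) : IsExposedFaceOf K (K ∩ {y | φ y = φ x}) := by
  have hgreatest : IsGreatest (φ '' K) (φ x) := ⟨mem_image_of_mem φ hx, forall_mem_image.2 hmax⟩
  exact ⟨φ, hφ, hgreatest.bddAbove, by rw [hgreatest.csSup_eq]⟩

theorem IsExposedFaceOf.isFaceOf (hK : Convex ℝ K) (hF : IsExposedFaceOf K F) :
    IsFaceOf K F := by
  obtain ⟨φ, -, hbdd, rfl⟩ := hF
  refine isFaceOf_of_isExtreme (hK.inter (convex_hyperplane φ.isLinear _))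
    ⟨inter_subset_left, fun y hy z hz p ⟨_, hpM⟩ hp => ⟨hy, ?_⟩⟩
  obtain ⟨a, b, ha, hb, hab, rfl⟩ := hp
  have hyM := le_csSup hbdd (mem_image_of_mem φ hy)
  have hzM := le_csSup hbdd (mem_image_of_mem φ hz)
  simp only [mem_ofPred_eq, map_add, map_smul, smul_eq_mul] at hpM ⊢
  have hsum : a * (sSup (φ '' K) - φ y) + b * (sSup (φ '' K) - φ z) = 0 := by
    linear_combination sSup (φ '' K) * hab - hpM
  by_contra hne
  linarith [mul_pos ha (sub_pos.2 (hyM.lt_of_ne hne)), mul_nonneg hb.le (sub_nonneg.2 hzM)]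

theorem affDim_empty : affDim (∅ : Set E) = 0 := by
  rw [affDim, AffineSubspace.span_empty, AffineSubspace.direction_bot, finrank_bot]

theorem AffineEquiv.affDim_image {W : Type*} [AddCommGroup W] [Module ℝ W] (h : E ≃ᵃ[ℝ] W)
    (s : Set E) : affDim (h '' s) = affDim s := by
  rw [affDim, affDim, ← h.coe_toAffineMap, ← AffineSubspace.map_span,
    AffineSubspace.map_direction]
  exact h.linear.finrank_map_eq _

theorem Convex.add_smul_mem_of_le (hK : Convex ℝ K) (hx : x ∈ K) {v : E} {ε δ : ℝ}
    (hε : x + ε • v ∈ K) (hδ : 0 ≤ δ) (hδε : δ ≤ ε) : x + δ • v ∈ K := by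
  rcases hδ.eq_or_lt with rfl | hδ
  · simpa using hx
  have hε0 := hδ.trans_le hδε
  have := hK.add_smul_mem hx hε ⟨div_nonneg hδ.le hε0.le, div_le_one_of_le₀ hδε hε0.le⟩
  rwa [smul_smul, div_mul_cancel₀ _ hε0.ne'] at this

/-- The face `F_x` of `K` whose relative interior contains `x`. -/
def minimalFace (K : Set E) (x : E) : Set E :=
  {y ∈ K | ∃ ε : ℝ, 0 < ε ∧ x + ε • (x - y) ∈ K}

theorem self_mem_minimalFace (hx : x ∈ K) : x ∈ minimalFace K x :=
  ⟨hx, 1, one_pos, by simpa using hx⟩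

theorem Convex.minimalFace (hK : Convex ℝ K) (hx : x ∈ K) : Convex ℝ (minimalFace K x) := by
  rintro y₁ ⟨hy₁, ε₁, hε₁, h₁⟩ y₂ ⟨hy₂, ε₂, hε₂, h₂⟩ a b ha hb hab
  set ε := min ε₁ ε₂
  have h₁' := hK.add_smul_mem_of_le hx h₁ (lt_min hε₁ hε₂).le (min_le_left _ _)
  have h₂' := hK.add_smul_mem_of_le hx h₂ (lt_min hε₁ hε₂).le (min_le_right _ _)
  refine ⟨hK hy₁ hy₂ ha hb hab, ε, lt_min hε₁ hε₂, ?_⟩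
  convert hK h₁' h₂' ha hb hab using 1
  obtain rfl := eq_sub_of_add_eq hab
  module

theorem isExtreme_minimalFace (hK : Convex ℝ K) (hx : x ∈ K) :
    IsExtreme ℝ K (minimalFace K x) := by
  refine ⟨fun _ hy => hy.1, fun y hy z hz p ⟨_, ε, hε, hq⟩ hp => ?_⟩
  obtain ⟨a, b, ha, hb, hab, rfl⟩ := hp
  refine ⟨hy, ε * a / (1 + ε), by positivity, ?_⟩
  -- With `p = a y + b z` and `δ = ε a / (1 + ε)`, the point `x + δ (x - y)` is the convex
  -- combination `(x + ε (x - p) + ε (a x + b z)) / (1 + ε)`.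
  convert hK hq (hK hx hz ha.le hb.le hab) (by positivity : 0 ≤ 1 / (1 + ε))
    (by positivity : 0 ≤ ε / (1 + ε)) (by field_simp) using 1
  obtain rfl := eq_sub_of_add_eq hab
  match_scalars <;> field_simp
  ring

theorem minimalFace_isFaceOf (hK : Convex ℝ K) (hx : x ∈ K) : IsFaceOf K (minimalFace K x) :=
  isFaceOf_of_isExtreme (hK.minimalFace hx) (isExtreme_minimalFace hK hx)

end

variable {V : Type*} [NormedAddCommGroup V] [NormedSpace ℝ V]

section

variable {K F G : Set V} {x : V}

theorem mem_intrinsicInterior_iff_eventually {s : Set V} {x : V} :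
    x ∈ intrinsicInterior ℝ s ↔
      x ∈ affineSpan ℝ s ∧ ∀ᶠ w in 𝓝 x, w ∈ affineSpan ℝ s → w ∈ s := by
  constructor
  · rintro ⟨y, hy, rfl⟩
    exact ⟨y.2, eventually_nhdsWithin_iff.1
      ((eventually_nhds_subtype_iff _ y (· ∈ s)).1 (mem_interior_iff_mem_nhds.1 hy))⟩
  · rintro ⟨hx, h⟩
    exact ⟨⟨x, hx⟩, mem_interior_iff_mem_nhds.2
      ((eventually_nhds_subtype_iff _ ⟨x, hx⟩ (· ∈ s)).2 (eventually_nhdsWithin_iff.2 h)), rfl⟩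

theorem intrinsicInterior_mono_of_affineSpan_eq {A B : Set V} (hAB : A ⊆ B)
    (hspan : affineSpan ℝ A = affineSpan ℝ B) :
    intrinsicInterior ℝ A ⊆ intrinsicInterior ℝ B := by
  unfold intrinsicInterior
  rw [hspan]
  exact image_mono (interior_mono (preimage_mono hAB))

theorem intrinsicInterior_subset_interior_of_affineSpan_eq_top {s : Set V}
    (hs : affineSpan ℝ s = ⊤) : intrinsicInterior ℝ s ⊆ interior s := by
  intro x hx
  rw [mem_intrinsicInterior_iff_eventually, hs] at hx
  exact mem_interior_iff_mem_nhds.2 (hx.2.mono fun w hw => hw (AffineSubspace.mem_top ℝ V w))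

theorem exists_mem_openSegment_of_mem_intrinsicInterior {s : Set V} {x y : V}
    (hx : x ∈ intrinsicInterior ℝ s) (hy : y ∈ s) : ∃ z ∈ s, x ∈ openSegment ℝ y z := by
  obtain ⟨hxs, hev⟩ := mem_intrinsicInterior_iff_eventually.1 hx
  have hline : Tendsto (fun t : ℝ => x + t • (x - y)) (𝓝[>] 0) (𝓝 x) := by
    have : Continuous fun t : ℝ => x + t • (x - y) := by fun_prop
    simpa using (this.tendsto 0).mono_left nhdsWithin_le_nhds
  obtain ⟨t, hts, ht⟩ := ((hline.eventually hev).and self_mem_nhdsWithin).exists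
  have ht : (0 : ℝ) < t := ht
  have hspan : x + t • (x - y) ∈ affineSpan ℝ s := by
    simpa [vsub_eq_sub, vadd_eq_add, add_comm] using
      AffineSubspace.smul_vsub_vadd_mem _ t hxs (subset_affineSpan ℝ s hy) hxs
  refine ⟨_, hts hspan, t / (1 + t), 1 / (1 + t), by positivity, by positivity,
    by field_simp; ring, ?_⟩
  match_scalars <;> field_simp
  ring

theorem IsFaceOf.subset_of_mem_intrinsicInterior (hF : IsFaceOf K F) (hGK : G ⊆ K)
    (hxF : x ∈ F) (hxG : x ∈ intrinsicInterior ℝ G) : G ⊆ F := fun y hy => by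
  obtain ⟨z, hz, hxyz⟩ := exists_mem_openSegment_of_mem_intrinsicInterior hxG hy
  exact hF.2.2 y (hGK hy) z (hGK hz) ⟨x, hxyz, hxF⟩ (left_mem_segment ℝ y z)

end

section FiniteDimensional

variable [FiniteDimensional ℝ V] {K F G : Set V} {x : V}

theorem affDim_mono {A B : Set V} (h : A ⊆ B) : affDim A ≤ affDim B :=
  Submodule.finrank_mono (AffineSubspace.direction_le (affineSpan_mono ℝ h))

theorem affDim_le_finrank (A : Set V) : affDim A ≤ finrank ℝ V :=
  Submodule.finrank_le _

theorem affDim_eq_finrank_iff {A : Set V} (hA : A.Nonempty) :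
    affDim A = finrank ℝ V ↔ affineSpan ℝ A = ⊤ := by
  rw [affDim, ← Submodule.eq_top_iff_finrank_eq,
    AffineSubspace.direction_eq_top_iff_of_nonempty ((affineSpan_nonempty ℝ).2 hA)]

theorem affDim_eq_finrank_of_interior_nonempty {A : Set V} (h : (interior A).Nonempty) :
    affDim A = finrank ℝ V :=
  (affDim_eq_finrank_iff (h.mono interior_subset)).2
    (affineSpan_eq_top_of_nonempty_interior (h.mono (interior_mono (subset_convexHull ℝ A))))

theorem affDim_lt_finrank_of_forall_eq {A : Set V} {φ : V →ₗ[ℝ] ℝ} (hφ : φ ≠ 0) {c : ℝ}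
    (hA : ∀ y ∈ A, φ y = c) : affDim A < finrank ℝ V := by
  have hdir : (affineSpan ℝ A).direction ≤ LinearMap.ker φ := by
    rw [direction_affineSpan, vectorSpan_def, Submodule.span_le]
    rintro _ ⟨y, hy, z, hz, rfl⟩
    simp [hA y hy, hA z hz]
  exact (Submodule.finrank_mono hdir).trans_lt
    (Submodule.finrank_lt (LinearMap.ker_eq_top.not.2 hφ))

theorem affineSpan_eq_of_subset_of_affDim_le {A B : Set V} (hAB : A ⊆ B) (hA : A.Nonempty)
    (hdim : affDim B ≤ affDim A) : affineSpan ℝ A = affineSpan ℝ B := by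
  obtain ⟨p, hp⟩ := hA
  have hle := affineSpan_mono ℝ hAB
  refine (AffineSubspace.eq_iff_direction_eq_of_mem (subset_affineSpan ℝ A hp)
    (hle (subset_affineSpan ℝ A hp))).2 ?_
  exact Submodule.eq_of_le_of_finrank_le (AffineSubspace.direction_le hle) hdim

theorem Convex.openSegment_self_intrinsicInterior_subset_intrinsicInterior {s : Set V}
    (hs : Convex ℝ s) {z b : V} (hz : z ∈ s) (hb : b ∈ intrinsicInterior ℝ s) :
    openSegment ℝ z b ⊆ intrinsicInterior ℝ s := by
  rintro x ⟨a, c, ha, hc, hac, rfl⟩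
  -- `a z + c b` is the image of `b` under the homothety with centre `z` and ratio `c`, which
  -- maps `s` into itself and preserves its dimension, hence its affine span.
  let h : V ≃ᵃ[ℝ] V := AffineEquiv.homothetyUnitsMulHom z (Units.mk0 c hc.ne')
  have hh : ∀ y, h y = a • z + c • y := fun y => by
    simp only [h, AffineEquiv.coe_homothetyUnitsMulHom_apply, Units.val_mk0,
      AffineMap.homothety_apply, vsub_eq_sub, vadd_eq_add, eq_sub_of_add_eq hac]
    module
  have himage : h '' s ⊆ s := by
    rintro _ ⟨y, hy, rfl⟩
    rw [hh]
    exact hs hz hy ha.le hc.le hac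
  have hspan : affineSpan ℝ (h '' s) = affineSpan ℝ s :=
    affineSpan_eq_of_subset_of_affDim_le himage ⟨h z, mem_image_of_mem h hz⟩
      (h.affDim_image s).ge
  rw [← hh]
  exact intrinsicInterior_mono_of_affineSpan_eq himage hspan
    (by rw [AffineEquiv.intrinsicInterior_image]; exact mem_image_of_mem h hb)

theorem IsFaceOf.affDim_le_of_mem_intrinsicInterior (hF : IsFaceOf K F) (hGK : G ⊆ K)
    (hxF : x ∈ F) (hxG : x ∈ intrinsicInterior ℝ G) : affDim G ≤ affDim F :=
  affDim_mono (hF.subset_of_mem_intrinsicInterior hGK hxF hxG)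

theorem IsFaceOf.notMem_interior (hF : IsFaceOf K F) (hdim : affDim F < finrank ℝ V)
    (hxF : x ∈ F) : x ∉ interior K := fun hxK => by
  have := hF.affDim_le_of_mem_intrinsicInterior subset_rfl hxF
    (interior_subset_intrinsicInterior hxK)
  rw [affDim_eq_finrank_of_interior_nonempty ⟨x, hxK⟩] at this
  omega

theorem mem_intrinsicInterior_minimalFace (hK : Convex ℝ K) (hx : x ∈ K) :
    x ∈ intrinsicInterior ℝ (minimalFace K x) := by
  have hconv := hK.minimalFace hx
  obtain ⟨b, hb⟩ := Set.Nonempty.intrinsicInterior hconv ⟨x, self_mem_minimalFace hx⟩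
  obtain ⟨hbK, ε, hε, hz⟩ := intrinsicInterior_subset hb
  have hxbz : x ∈ openSegment ℝ b (x + ε • (x - b)) := by
    refine ⟨ε / (1 + ε), 1 / (1 + ε), by positivity, by positivity, by field_simp; ring, ?_⟩
    match_scalars <;> field_simp
    ring
  have hzF := (isExtreme_minimalFace hK hx).right_mem_of_mem_openSegment hbK hz
    (self_mem_minimalFace hx) hxbz
  exact hconv.openSegment_self_intrinsicInterior_subset_intrinsicInterior hzF hb
    (openSegment_symm ℝ b _ ▸ hxbz)

theorem Convex.exists_forall_le_of_notMem_interior (hK : Convex ℝ K) (hx : x ∈ K)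
    (hxi : x ∉ interior K) : ∃ φ : V →ₗ[ℝ] ℝ, φ ≠ 0 ∧ ∀ y ∈ K, φ y ≤ φ x := by
  by_cases hint : (interior K).Nonempty
  · obtain ⟨f, hf0, hf⟩ := geometric_hahn_banach_of_nonempty_interior_point hK hxi hint
    exact ⟨f, fun h => hf0 (ContinuousLinearMap.coe_injective h), hf⟩
  have hdir : (affineSpan ℝ K).direction < ⊤ := by
    rw [lt_top_iff_ne_top, Ne, AffineSubspace.direction_eq_top_iff_of_nonempty
      ((affineSpan_nonempty ℝ).2 ⟨x, hx⟩), ← hK.interior_nonempty_iff_affineSpan_eq_top]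
    exact hint
  obtain ⟨φ, hφ0, hφ⟩ := Submodule.exists_le_ker_of_lt_top _ hdir
  refine ⟨φ, hφ0, fun y hy => le_of_eq ?_⟩
  have := hφ (AffineSubspace.vsub_mem_direction (subset_affineSpan ℝ K hy)
    (subset_affineSpan ℝ K hx))
  simpa [sub_eq_zero] using this

theorem IsFaceOf.isExposedFaceOf (hK : Convex ℝ K) (hF : IsFaceOf K F) (hFne : F.Nonempty)
    (hdim : affDim F + 1 = finrank ℝ V) : IsExposedFaceOf K F := by
  obtain ⟨x, hx⟩ := hFne.intrinsicInterior hF.2.1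
  have hxF := intrinsicInterior_subset hx
  obtain ⟨φ, hφ0, hφ⟩ :=
    hK.exists_forall_le_of_notMem_interior (hF.1 hxF) (hF.notMem_interior (by omega) hxF)
  set E := K ∩ {y | φ y = φ x}
  have hE : IsExposedFaceOf K E := isExposedFaceOf_of_forall_le hφ0 (hF.1 hxF) hφ
  have hEdim : affDim E < finrank ℝ V := affDim_lt_finrank_of_forall_eq hφ0 fun y hy => hy.2
  have hFE := (hE.isFaceOf hK).subset_of_mem_intrinsicInterior hF.1 ⟨hF.1 hxF, rfl⟩ hx
  have hspan := affineSpan_eq_of_subset_of_affDim_le hFE hFne (by omega)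
  have hEF := hF.subset_of_mem_intrinsicInterior inter_subset_left hxF
    (intrinsicInterior_mono_of_affineSpan_eq hFE hspan hx)
  rwa [hFE.antisymm hEF]

theorem kSkeleton_finrank_sub_two_eq (hn : 2 ≤ finrank ℝ V) (hKcl : IsClosed K)
    (hK : Convex ℝ K) :
    kSkeleton (finrank ℝ V - 2) K =
      frontier K \ ⋃ F ∈ {F : Set V | IsExposedFaceOf K F ∧ affDim F = finrank ℝ V - 1},
        intrinsicInterior ℝ F := by
  ext x
  simp only [kSkeleton, hKcl.frontier_eq, mem_ofPred_eq, Set.mem_sdiff, mem_iUnion, exists_prop,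
    not_exists, not_and]
  constructor
  · rintro ⟨hxK, F, hF, hxF, hdim⟩
    refine ⟨⟨hxK, hF.notMem_interior (by omega) (intrinsicInterior_subset hxF)⟩,
      fun G ⟨hG, hGdim⟩ hxG => ?_⟩
    have := hF.affDim_le_of_mem_intrinsicInterior (hG.isFaceOf hK).1
      (intrinsicInterior_subset hxF) hxG
    omega
  · rintro ⟨⟨hxK, hxi⟩, hxG⟩
    have hface := minimalFace_isFaceOf hK hxK
    have hxF := mem_intrinsicInterior_minimalFace hK hxK
    have hne : (minimalFace K x).Nonempty := ⟨x, self_mem_minimalFace hxK⟩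
    refine ⟨hxK, minimalFace K x, hface, hxF, ?_⟩
    have hfull : affDim (minimalFace K x) ≠ finrank ℝ V := fun h =>
      hxi (interior_mono hface.1 (intrinsicInterior_subset_interior_of_affineSpan_eq_top
        ((affDim_eq_finrank_iff hne).1 h) hxF))
    have hcodim1 : affDim (minimalFace K x) ≠ finrank ℝ V - 1 := fun h =>
      hxG _ ⟨hface.isExposedFaceOf hK hne (by omega), h⟩ hxF
    have := affDim_le_finrank (minimalFace K x)
    omega

end FiniteDimensional

/-- Every `(d-1)`-face of a closed convex set `K ⊆ ℝ^d` (`d ≥ 2`) is exposed, and the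
`(d-2)`-skeleton of `K` is the boundary of `K` minus the relative interiors of the exposed
`(d-1)`-faces. -/
theorem face_dim_pred_exposed_and_skeleton_eq
    {d : ℕ} (hd : 2 ≤ d) (K : Set (EuclideanSpace ℝ (Fin d)))
    (hKcl : IsClosed K) (hKcv : Convex ℝ K) :
    (∀ F : Set (EuclideanSpace ℝ (Fin d)),
      IsFaceOf K F → affDim F = d - 1 → IsExposedFaceOf K F) ∧
    kSkeleton (d - 2) K =
      frontier K \
        ⋃ F ∈ {F : Set (EuclideanSpace ℝ (Fin d)) |
            IsExposedFaceOf K F ∧ affDim F = d - 1},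
          intrinsicInterior ℝ F := by
  have hfin : finrank ℝ (EuclideanSpace ℝ (Fin d)) = d := finrank_euclideanSpace_fin
  have hskel := kSkeleton_finrank_sub_two_eq (by omega) hKcl hKcv
  rw [hfin] at hskel
  refine ⟨fun F hF hdim => hF.isExposedFaceOf hKcv ?_ (by omega), hskel⟩
  rw [nonempty_iff_ne_empty]
  rintro rfl
  rw [affDim_empty] at hdim
  omega
end
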